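/- Let G, H ≤ Sym(S) be dual groups in the sense of Lewin, let G₀ be a subgroup of G, let s₀ ∈ S, let S₀ = { g(s₀) : g ∈ G₀ }, and let H₀ = { h ∈ H : h(s₀) ∈ S₀ }. Since every element of G₀ and of H₀ preserves S₀, restriction to S₀ gives injective homomorphisms of G₀ and H₀ into Sym(S₀); denote the images by G₀|_{S₀} and H₀|_{S₀}. Then G₀|_{S₀} and H₀|_{S₀} are dual groups in Sym(S₀): each acts simply transitively on S₀ and each is the centralizer of the other in Sym(S₀). -/

import Mathlib

/-- The orbit of `s₀` under a subgroup `G₀` of the symmetric group. -/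
def orbitSet {S : Type*} (G₀ : Subgroup (Equiv.Perm S)) (s₀ : S) : Set S :=
  {x | ∃ g ∈ G₀, g s₀ = x}

/-- The set H₀ of elements of H carrying s₀ into the orbit S₀ of s₀ under G₀. -/
def Hsub {S : Type*} (H G₀ : Subgroup (Equiv.Perm S)) (s₀ : S) : Set (Equiv.Perm S) :=
  {h | h ∈ H ∧ h s₀ ∈ orbitSet G₀ s₀}

/-- The image G₀|_{S₀} of G₀ in Sym(S₀) under restriction to S₀. -/
def Gres {S : Type*} (G₀ : Subgroup (Equiv.Perm S)) (s₀ : S) :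
    Set (Equiv.Perm (orbitSet G₀ s₀)) :=
  {p | ∃ g ∈ G₀, ∀ x : orbitSet G₀ s₀, (p x : S) = g x}

/-- The image H₀|_{S₀} of H₀ in Sym(S₀) under restriction to S₀. -/
def Hres {S : Type*} (H G₀ : Subgroup (Equiv.Perm S)) (s₀ : S) :
    Set (Equiv.Perm (orbitSet G₀ s₀)) :=
  {p | ∃ h ∈ Hsub H G₀ s₀, ∀ x : orbitSet G₀ s₀, (p x : S) = h x}

/-!
Every `h ∈ H` commutes with `G₀`, so `h (g s₀) = g (h s₀)`: such an `h` preserves `S₀` as soon as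
`h s₀ ∈ S₀`, and by transitivity of `H` the restrictions `H₀|_{S₀}` are transitive on `S₀`, as
are the `G₀|_{S₀}`. Freeness of both restrictions is inherited from `G` and `H`. The two
restricted groups commute, and a permutation commuting with a transitive set is determined by
the image of a single point; hence any permutation of `S₀` centralizing one restricted group
agrees with an element of the other (chosen by transitivity to match it at `s₀`) everywhere.
-/

namespace Equiv.Perm

variable {α : Type*}

theorem eq_of_commute_of_apply_eq {Q : Set (Perm α)} {a : α} (hQ : ∀ x, ∃ q ∈ Q, q a = x)
    {p p' : Perm α} (hp : ∀ q ∈ Q, Commute p q) (hp' : ∀ q ∈ Q, Commute p' q)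
    (h : p a = p' a) : p = p' := by
  ext x
  obtain ⟨q, hq, rfl⟩ := hQ x
  calc p (q a) = q (p a) := congrArg (· a) (hp q hq).eq
    _ = q (p' a) := by rw [h]
    _ = p' (q a) := (congrArg (· a) (hp' q hq).eq).symm

theorem setOf_commute_eq {P Q : Set (Perm α)} (a : α) (hP : ∀ x, ∃ p ∈ P, p a = x)
    (hQ : ∀ x, ∃ q ∈ Q, q a = x) (hPQ : ∀ p ∈ P, ∀ q ∈ Q, Commute p q) :
    {p | ∀ q ∈ Q, p * q = q * p} = P := by
  ext p
  refine ⟨fun hp => ?_, fun hp q hq => hPQ p hp q hq⟩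
  obtain ⟨p', hp', hp'a⟩ := hP (p a)
  rwa [eq_of_commute_of_apply_eq hQ hp (hPQ p' hp') hp'a.symm]

variable {T : Set α}

theorem commute_of_coe_apply {p q : Perm T} {f g : Perm α} (hp : ∀ x, (p x : α) = f x)
    (hq : ∀ x, (q x : α) = g x) (hfg : Commute f g) : Commute p q := by
  ext x
  change ((p (q x) : T) : α) = q (p x)
  rw [hp, hq, hq, hp]
  exact congrArg (· x) hfg.eq

theorem eq_of_coe_apply_eq {K : Subgroup (Perm α)}
    (hK : ∀ s t : α, ∃! k : K, (k : Perm α) s = t) {p p' : Perm T} {f f' : Perm α}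
    (hf : f ∈ K) (hf' : f' ∈ K) (hp : ∀ x, (p x : α) = f x) (hp' : ∀ x, (p' x : α) = f' x)
    {x : T} (hx : p x = p' x) : p = p' := by
  have hff' : f = f' := congrArg Subtype.val <| (hK x (p x)).unique (y₁ := ⟨f, hf⟩)
    (y₂ := ⟨f', hf'⟩) (hp x).symm (by rw [hx, hp'])
  ext y
  rw [hp, hp', hff']

end Equiv.Perm

open Equiv

section Orbit

variable {S : Type*} {G₀ : Subgroup (Perm S)} {s₀ : S}

theorem apply_mem_orbitSet_iff {g : Perm S} (hg : g ∈ G₀) (x : S) :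
    g x ∈ orbitSet G₀ s₀ ↔ x ∈ orbitSet G₀ s₀ := by
  refine ⟨fun ⟨g', hg', hgx⟩ => ⟨g⁻¹ * g', G₀.mul_mem (G₀.inv_mem hg) hg', ?_⟩, ?_⟩
  · simp [Perm.mul_apply, hgx]
  · rintro ⟨g', hg', rfl⟩
    exact ⟨g * g', G₀.mul_mem hg hg', rfl⟩

theorem apply_mem_orbitSet_iff_of_commute {h : Perm S} (hcomm : ∀ g ∈ G₀, Commute g h)
    (hh : h s₀ ∈ orbitSet G₀ s₀) (x : S) :
    h x ∈ orbitSet G₀ s₀ ↔ x ∈ orbitSet G₀ s₀ := by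
  obtain ⟨g₁, hg₁, hg₁s⟩ := hh
  have h_orbit : ∀ g ∈ G₀, h (g s₀) = (g * g₁) s₀ := fun g hg => by
    rw [Perm.mul_apply, hg₁s]
    exact (congrArg (· s₀) (hcomm g hg).eq).symm
  constructor
  · rintro ⟨g₂, hg₂, hg₂s⟩
    refine ⟨g₂ * g₁⁻¹, G₀.mul_mem hg₂ (G₀.inv_mem hg₁), h.injective ?_⟩
    rw [h_orbit _ (G₀.mul_mem hg₂ (G₀.inv_mem hg₁)), inv_mul_cancel_right, hg₂s]
  · rintro ⟨g, hg, rfl⟩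
    exact ⟨g * g₁, G₀.mul_mem hg hg₁, (h_orbit g hg).symm⟩

theorem exists_mem_Gres_apply_eq (x y : orbitSet G₀ s₀) :
    ∃ p ∈ Gres G₀ s₀, p x = y := by
  obtain ⟨x, g₁, hg₁, rfl⟩ := x
  obtain ⟨y, g₂, hg₂, rfl⟩ := y
  have hg : g₂ * g₁⁻¹ ∈ G₀ := G₀.mul_mem hg₂ (G₀.inv_mem hg₁)
  exact ⟨(g₂ * g₁⁻¹).subtypePerm (apply_mem_orbitSet_iff hg), ⟨_, hg, fun _ => rfl⟩,
    Subtype.ext (by simp [Perm.mul_apply])⟩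

variable {H : Subgroup (Perm S)}

theorem exists_mem_Hres_apply_eq (hcomm : ∀ g ∈ G₀, ∀ h ∈ H, Commute g h)
    (hH : ∀ s t : S, ∃ h ∈ H, h s = t) (x y : orbitSet G₀ s₀) :
    ∃ p ∈ Hres H G₀ s₀, p x = y := by
  obtain ⟨h, hh, hhx⟩ := hH x y
  obtain ⟨g, hg, hgx⟩ := x.2
  have hhs₀ : h s₀ ∈ orbitSet G₀ s₀ := by
    rw [← apply_mem_orbitSet_iff hg, ← Perm.mul_apply, (hcomm g hg h hh).eq, Perm.mul_apply,
      hgx, hhx]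
    exact y.2
  exact ⟨h.subtypePerm (apply_mem_orbitSet_iff_of_commute (fun g hg => hcomm g hg h hh) hhs₀),
    ⟨h, ⟨hh, hhs₀⟩, fun _ => rfl⟩, Subtype.ext hhx⟩

theorem Gres_commute_Hres (hcomm : ∀ g ∈ G₀, ∀ h ∈ H, Commute g h) :
    ∀ p ∈ Gres G₀ s₀, ∀ q ∈ Hres H G₀ s₀, Commute p q := by
  rintro p ⟨g, hg, hp⟩ q ⟨h, hh, hq⟩
  exact Perm.commute_of_coe_apply hp hq (hcomm g hg h hh.1)

end Orbit

theorem stmt_14_general {S : Type*} (G H : Subgroup (Equiv.Perm S))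
    (hGst : ∀ s t : S, ∃! g : G, (g : Equiv.Perm S) s = t)
    (hHst : ∀ s t : S, ∃! h : H, (h : Equiv.Perm S) s = t)
    (hGH : Subgroup.centralizer (G : Set (Equiv.Perm S)) = H)
    (G₀ : Subgroup (Equiv.Perm S)) (hG₀ : G₀ ≤ G) (s₀ : S) :
    (∀ x y : orbitSet G₀ s₀,
      ∃! p : Equiv.Perm (orbitSet G₀ s₀), p ∈ Gres G₀ s₀ ∧ p x = y) ∧
    (∀ x y : orbitSet G₀ s₀,
      ∃! p : Equiv.Perm (orbitSet G₀ s₀), p ∈ Hres H G₀ s₀ ∧ p x = y) ∧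
    ({p : Equiv.Perm (orbitSet G₀ s₀) | ∀ q ∈ Hres H G₀ s₀, p * q = q * p}
       = Gres G₀ s₀) ∧
    ({p : Equiv.Perm (orbitSet G₀ s₀) | ∀ q ∈ Gres G₀ s₀, p * q = q * p}
       = Hres H G₀ s₀) := by
  have hcomm : ∀ g ∈ G₀, ∀ h ∈ H, Commute g h := fun g hg h hh =>
    Subgroup.mem_centralizer_iff.mp (hGH ▸ hh) g (hG₀ hg)
  have hH : ∀ s t : S, ∃ h ∈ H, h s = t := fun s t =>
    let ⟨⟨h, hh⟩, hht, _⟩ := hHst s t; ⟨h, hh, hht⟩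
  have hGtrans := exists_mem_Gres_apply_eq (G₀ := G₀) (s₀ := s₀)
  have hHtrans := exists_mem_Hres_apply_eq (s₀ := s₀) hcomm hH
  have hGHres := Gres_commute_Hres (s₀ := s₀) hcomm
  let t₀ : orbitSet G₀ s₀ := ⟨s₀, 1, G₀.one_mem, rfl⟩
  refine ⟨fun x y => existsUnique_of_exists_of_unique (hGtrans x y) ?_,
    fun x y => existsUnique_of_exists_of_unique (hHtrans x y) ?_,
    Perm.setOf_commute_eq t₀ (hGtrans t₀) (hHtrans t₀) hGHres,
    Perm.setOf_commute_eq t₀ (hHtrans t₀) (hGtrans t₀)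
      fun p hp q hq => (hGHres q hq p hp).symm⟩
  · rintro p p' ⟨⟨g, hg, hp⟩, hpx⟩ ⟨⟨g', hg', hp'⟩, hp'x⟩
    exact Perm.eq_of_coe_apply_eq hGst (hG₀ hg) (hG₀ hg') hp hp' (hpx.trans hp'x.symm)
  · rintro p p' ⟨⟨h, hh, hp⟩, hpx⟩ ⟨⟨h', hh', hp'⟩, hp'x⟩
    exact Perm.eq_of_coe_apply_eq hHst hh.1 hh'.1 hp hp' (hpx.trans hp'x.symm)

/-- With G, H ≤ Sym(S) dual, G₀ ≤ G, S₀ the G₀-orbit of s₀, and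
H₀ = { h ∈ H : h(s₀) ∈ S₀ }, the restrictions G₀|_{S₀} and H₀|_{S₀} are dual in
Sym(S₀): each acts simply transitively on S₀ and each is the centralizer of the
other in Sym(S₀). -/
theorem stmt_14 {S : Type*} (G H : Subgroup (Equiv.Perm S))
    (hGst : ∀ s t : S, ∃! g : G, (g : Equiv.Perm S) s = t)
    (hHst : ∀ s t : S, ∃! h : H, (h : Equiv.Perm S) s = t)
    (hGH : Subgroup.centralizer (G : Set (Equiv.Perm S)) = H)
    (hHG : Subgroup.centralizer (H : Set (Equiv.Perm S)) = G)
    (G₀ : Subgroup (Equiv.Perm S)) (hG₀ : G₀ ≤ G) (s₀ : S) :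
    (∀ x y : orbitSet G₀ s₀,
      ∃! p : Equiv.Perm (orbitSet G₀ s₀), p ∈ Gres G₀ s₀ ∧ p x = y) ∧
    (∀ x y : orbitSet G₀ s₀,
      ∃! p : Equiv.Perm (orbitSet G₀ s₀), p ∈ Hres H G₀ s₀ ∧ p x = y) ∧
    ({p : Equiv.Perm (orbitSet G₀ s₀) | ∀ q ∈ Hres H G₀ s₀, p * q = q * p}
       = Gres G₀ s₀) ∧
    ({p : Equiv.Perm (orbitSet G₀ s₀) | ∀ q ∈ Gres G₀ s₀, p * q = q * p}
       = Hres H G₀ s₀) :=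
  stmt_14_general G H hGst hHst hGH G₀ hG₀ s₀
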